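/- Let R≥1 and D≥1 be integers, and let G be a finite tree with diameter at most 2R whose every vertex has degree at most D+1. Then λ₂(G) ≥ 1/(Σ_{i=0}^{R−1} D^i); when D≥2 this bound equals (D−1)/(D^R−1). -/

import Mathlib

open Finset

attribute [local instance] Classical.propDecidable

namespace Steklov

variable {V : Type} [Fintype V] [DecidableEq V]

/-- The boundary of a graph: the set of vertices of degree one. -/
noncomputable def bdry (G : SimpleGraph V) : Finset V :=
  Finset.univ.filter (fun v => G.degree v = 1)

/-- The graph Laplacian `Δf(x) = Σ_{y∼x} (f x - f y)`. -/
noncomputable def lap (G : SimpleGraph V) (f : V → ℝ) (x : V) : ℝ :=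
  ∑ y ∈ G.neighborFinset x, (f x - f y)

/-- `f` is a Steklov eigenfunction of `G` with eigenvalue `lam`:
`f ≠ 0`, `Δf = 0` on the interior and `∂f/∂n = lam • f` on the boundary. -/
noncomputable def IsEigenpair (G : SimpleGraph V) (lam : ℝ) (f : V → ℝ) : Prop :=
  f ≠ 0 ∧ (∀ x, x ∉ bdry G → lap G f x = 0) ∧ ∀ x ∈ bdry G, lap G f x = lam * f x

/-- The first nonzero Steklov eigenvalue of `G`. -/
noncomputable def lambda2 (G : SimpleGraph V) : ℝ :=
  sInf {lam : ℝ | 0 < lam ∧ ∃ f : V → ℝ, IsEigenpair G lam f}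

/-- `f` is a `lam`-flow to `x` on `G`. -/
noncomputable def IsFlow (G : SimpleGraph V) (lam : ℝ) (x : V) (f : V → ℝ) : Prop :=
  f ≠ 0 ∧ (∀ w, w ∉ bdry G → w ≠ x → lap G f w = 0) ∧
    ∀ w ∈ bdry G, w ≠ x → lap G f w = lam * f w

/-- The Rayleigh quotient of `f` (sum over undirected edges in the numerator). -/
noncomputable def rayleigh (G : SimpleGraph V) (f : V → ℝ) : ℝ :=
  ((∑ x, ∑ y ∈ G.neighborFinset x, (f x - f y) ^ 2) / 2) / ∑ x ∈ bdry G, f x ^ 2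

/-- `Σ(G,x)`: the set of `lam ≥ 0` admitting a `lam`-flow `f` to `x` with `f x = 0`
which increases along edges pointing away from `x`. -/
def SigmaSet (G : SimpleGraph V) (x : V) : Set ℝ :=
  {lam | 0 ≤ lam ∧ ∃ f : V → ℝ, IsFlow G lam x f ∧ f x = 0 ∧
    ∀ y z : V, G.Adj y z → G.dist x z < G.dist x y → f z < f y}

/-- `Σ̂(G,x)`: the set of `lam ≥ 0` admitting a `lam`-flow `f` to `x` with `f x = 0`. -/
def SigmaHatSet (G : SimpleGraph V) (x : V) : Set ℝ :=
  {lam | 0 ≤ lam ∧ ∃ f : V → ℝ, IsFlow G lam x f ∧ f x = 0}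

/-- `σ(G,x) = inf Σ(G,x)`. -/
noncomputable def sigma (G : SimpleGraph V) (x : V) : ℝ := sInf (SigmaSet G x)

/-- `σ̂(G,x) = inf Σ̂(G,x)`. -/
noncomputable def sigmaHat (G : SimpleGraph V) (x : V) : ℝ := sInf (SigmaHatSet G x)

/-- The vertex set of the branch from `(u,v)`: the connected component of `u`
after deleting the edge between `u` and `v`. -/
def branchSet (G : SimpleGraph V) (u v : V) : Set V :=
  {w | (G.deleteEdges {s(u, v)}).Reachable u w}

/-- The vertex set of the subtree `H(u,v)` spanned by the branch from `(u,v)` together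
with `v`. -/
def branchClosed (G : SimpleGraph V) (u v : V) : Set V :=
  insert v (branchSet G u v)

/-- `σ(H(u,v), v)`, computed intrinsically in the subtree `H(u,v)`. -/
noncomputable def sigmaB (G : SimpleGraph V) (u v : V) : ℝ :=
  sigma (G.induce (branchClosed G u v)) ⟨v, Set.mem_insert _ _⟩

/-- The double `(G)²_x` of `G` at `x`: two disjoint copies of `G` with the two
copies of `x` identified. -/
def doubleAt (G : SimpleGraph V) (x : V) : SimpleGraph (V ⊕ {v : V // v ≠ x}) where
  Adj a b :=
    match a, b with
    | Sum.inl u, Sum.inl w => G.Adj u w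
    | Sum.inr u, Sum.inr w => G.Adj u.1 w.1
    | Sum.inl u, Sum.inr w => u = x ∧ G.Adj x w.1
    | Sum.inr u, Sum.inl w => w = x ∧ G.Adj x u.1
  symm := by
    constructor
    rintro (u | u) (w | w) h
    · exact h.symm
    · exact h
    · exact h
    · exact h.symm
  loopless := by
    constructor
    rintro (u | u) h
    · exact G.loopless.irrefl u h
    · exact G.loopless.irrefl u.1 h

/-!
Centre the tree at a vertex `x₀` of eccentricity at most `R`, the midpoint of a diametral path.
A Steklov eigenfunction `f` with eigenvalue `λ > 0` sums to zero over the leaves, so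
`∑ f² ≤ ∑ (f z - f x₀)²` over the leaves. Along the geodesic from `x₀` to a leaf `z`, weighted
Cauchy–Schwarz with weight `D ^ (R - 1 - k)` on the edge leaving depth `k` bounds
`(f z - f x₀)²` by `S = ∑_{i<R} D^i` times the weighted sum of the squared increments. An edge
leaving depth `k` lies on the geodesics of at most `D ^ (R - 1 - k)` leaves, so summing over the
leaves gives `∑ f² ≤ S ⟨f, Δf⟩ = S λ ∑ f²`. Positive eigenvalues exist because the
Dirichlet-to-Neumann map is symmetric and positive on a nonconstant boundary function.
-/

end Steklov

namespace SimpleGraph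

variable {W : Type*} {G : SimpleGraph W} {u v : W}

lemma Walk.dist_getVert_of_length_eq_dist {p : G.Walk u v} (hp : p.length = G.dist u v) {i : ℕ}
    (hi : i ≤ p.length) : G.dist u (p.getVert i) = i := by
  rw [← length_eq_dist_of_subwalk hp (p.isSubwalk_take i), Walk.take_length]
  omega

lemma Walk.dist_getVert_end_of_length_eq_dist {p : G.Walk u v} (hp : p.length = G.dist u v)
    (i : ℕ) : G.dist (p.getVert i) v = p.length - i := by
  rw [← length_eq_dist_of_subwalk hp (p.isSubwalk_drop i), Walk.drop_length]

lemma exists_adj_dist_add_one_eq (h : G.dist u v ≠ 0) :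
    ∃ w, G.Adj u w ∧ G.dist w v + 1 = G.dist u v := by
  obtain ⟨p, hp⟩ := exists_walk_of_dist_ne_zero h
  refine ⟨p.getVert 1, by simpa using p.adj_getVert_succ (i := 0) (by omega), ?_⟩
  rw [Walk.dist_getVert_end_of_length_eq_dist hp]
  omega

lemma IsTree.length_eq_dist_of_isPath (hG : G.IsTree) {p : G.Walk u v} (hp : p.IsPath) :
    p.length = G.dist u v := by
  obtain ⟨q, hq, hql⟩ := hG.connected.exists_path_of_dist u v
  rw [(hG.existsUnique_path u v).unique hp hq, hql]

lemma IsTree.dist_add_dist_of_mem_support (hG : G.IsTree) {p : G.Walk u v} (hp : p.IsPath)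
    {c : W} (hc : c ∈ p.support) : G.dist u c + G.dist c v = G.dist u v := by
  classical
  have hlen := congrArg Walk.length (p.take_spec hc)
  rw [Walk.length_append, hG.length_eq_dist_of_isPath (hp.takeUntil hc),
    hG.length_eq_dist_of_isPath (hp.dropUntil hc)] at hlen
  rw [hlen, hG.length_eq_dist_of_isPath hp]

lemma IsTree.dist_add_dist_eq_or_of_mem_support (hG : G.IsTree) {p : G.Walk u v} (hp : p.IsPath)
    {c : W} (hc : c ∈ p.support) (z : W) :
    G.dist z c + G.dist c u = G.dist z u ∨ G.dist z c + G.dist c v = G.dist z v := by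
  classical
  obtain ⟨qu, hqu, -⟩ := hG.connected.exists_path_of_dist z u
  obtain ⟨qv, hqv, -⟩ := hG.connected.exists_path_of_dist z v
  by_cases hcu : c ∈ qu.support
  · exact .inl (hG.dist_add_dist_of_mem_support hqu hcu)
  by_cases hcv : c ∈ qv.support
  · exact .inr (hG.dist_add_dist_of_mem_support hqv hcv)
  have hpath := (hG.existsUnique_path u v).unique hp (qu.reverse.append qv).bypass_isPath
  have := (qu.reverse.append qv).support_bypass_subset_support (hpath ▸ hc)
  simp [Walk.mem_support_append_iff, hcu, hcv] at this

lemma IsTree.exists_forall_dist_le [Finite W] (hG : G.IsTree) {R : ℕ} (hdiam : G.diam ≤ 2 * R) :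
    ∃ c, ∀ z, G.dist c z ≤ R := by
  have := hG.connected.nonempty
  obtain ⟨u, v, huv⟩ := G.exists_dist_eq_diam
  obtain ⟨p, hp, hpl⟩ := hG.connected.exists_path_of_dist u v
  have hcu := p.dist_getVert_of_length_eq_dist hpl (i := p.length / 2) (by omega)
  have hcv := p.dist_getVert_end_of_length_eq_dist hpl (p.length / 2)
  refine ⟨p.getVert (p.length / 2), fun z => ?_⟩
  have hfin := connected_iff_ediam_ne_top.mp hG.connected
  have hzu : G.dist z u ≤ G.diam := dist_le_diam hfin
  have hzv : G.dist z v ≤ G.diam := dist_le_diam hfin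
  rw [dist_comm] at hcu ⊢
  rcases hG.dist_add_dist_eq_or_of_mem_support hp (p.getVert_mem_support (p.length / 2)) z
    with h | h <;> omega

lemma Walk.sq_sub_le_sum_mul_sum_sq_div (p : G.Walk u v) (f : W → ℝ) {w : ℕ → ℝ}
    (hw : ∀ i, 0 < w i) :
    (f v - f u) ^ 2 ≤ (∑ i ∈ Finset.range p.length, w i) *
      ∑ i ∈ Finset.range p.length, (f (p.getVert (i + 1)) - f (p.getVert i)) ^ 2 / w i := by
  have htel : ∑ i ∈ Finset.range p.length, (f (p.getVert (i + 1)) - f (p.getVert i)) =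
      f v - f u := by
    rw [Finset.sum_range_sub (fun i => f (p.getVert i)), p.getVert_length, p.getVert_zero]
  rw [← htel]
  refine Finset.sum_sq_le_sum_mul_sum_of_sq_le_mul _ (fun i _ => (hw i).le)
    (fun i _ => div_nonneg (sq_nonneg _) (hw i).le) fun i _ => ?_
  rw [mul_div_cancel₀ _ (hw i).ne']

def IsGeodesicDart (G : SimpleGraph W) (x z : W) (q : W × W) : Prop :=
  G.Adj q.1 q.2 ∧ G.dist x q.1 + 1 + G.dist q.2 z = G.dist x z

end SimpleGraph

theorem Finset.sum_sq_le_sum_sq_sub_of_sum_eq_zero {ι : Type*} (s : Finset ι) {f : ι → ℝ}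
    (hf : ∑ i ∈ s, f i = 0) (c : ℝ) : ∑ i ∈ s, f i ^ 2 ≤ ∑ i ∈ s, (f i - c) ^ 2 := by
  have hexpand : ∑ i ∈ s, (f i - c) ^ 2 =
      ∑ i ∈ s, f i ^ 2 - 2 * c * ∑ i ∈ s, f i + ∑ _i ∈ s, c ^ 2 := by
    rw [mul_sum, ← sum_sub_distrib, ← sum_add_distrib]
    exact sum_congr rfl fun i _ => by ring
  rw [hexpand, hf, mul_zero, sub_zero]
  exact le_add_of_nonneg_right (sum_nonneg fun _ _ => sq_nonneg c)

open Matrix in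
theorem exists_pos_eigenvector_of_symmetric {ι : Type*} [Fintype ι]
    (T : (ι → ℝ) →ₗ[ℝ] (ι → ℝ)) (hT : ∀ g h, T g ⬝ᵥ h = g ⬝ᵥ T h) {g₀ : ι → ℝ}
    (hg₀ : 0 < T g₀ ⬝ᵥ g₀) : ∃ μ : ℝ, 0 < μ ∧ ∃ g ≠ 0, T g = μ • g := by
  let e := WithLp.linearEquiv 2 ℝ (ι → ℝ)
  let S : Module.End ℝ (EuclideanSpace ℝ ι) := e.symm.conj T
  have hinner : ∀ x y : EuclideanSpace ℝ ι, inner ℝ (S x) y = T (e x) ⬝ᵥ e y := fun x y => by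
    rw [EuclideanSpace.inner_eq_star_dotProduct, star_trivial, dotProduct_comm]; rfl
  have hS : S.IsSymmetric := fun x y => by
    rw [hinner, real_inner_comm, hinner, hT, dotProduct_comm]
  set x₀ := e.symm g₀
  have hx₀ : 0 < inner ℝ (S x₀) x₀ := by simpa [hinner, x₀] using hg₀
  have hx₀ne : x₀ ≠ 0 := by rintro h; simp [h] at hx₀
  have : Nontrivial (EuclideanSpace ℝ ι) := ⟨⟨x₀, 0, hx₀ne⟩⟩
  have hbdd : BddAbove (Set.range fun x : {x : EuclideanSpace ℝ ι // x ≠ 0} =>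
      RCLike.re (inner ℝ (S x) (x : EuclideanSpace ℝ ι)) / ‖(x : EuclideanSpace ℝ ι)‖ ^ 2) :=
    ⟨_, by
      rintro _ ⟨x, rfl⟩
      exact (le_abs_self _).trans ((LinearMap.toContinuousLinearMap S).rayleighQuotient_le_norm x)⟩
  obtain ⟨v, hv⟩ := hS.hasEigenvalue_iSup_of_finiteDimensional.exists_hasEigenvector
  have hμ := le_ciSup hbdd ⟨x₀, hx₀ne⟩
  refine ⟨_, lt_of_lt_of_le (div_pos hx₀ (by positivity)) hμ, e v, by simpa using hv.2, ?_⟩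
  simpa [S] using congrArg e hv.apply_eq_smul

namespace Steklov

variable {V : Type} [Fintype V] [DecidableEq V]

open SimpleGraph Matrix

section Laplacian

variable (G : SimpleGraph V)

lemma lap_eq_lapMatrix_mulVec (f : V → ℝ) : lap G f = G.lapMatrix ℝ *ᵥ f := by
  ext x
  rw [lapMatrix_mulVec_apply, lap, sum_sub_distrib, sum_const, card_neighborFinset_eq_degree,
    nsmul_eq_mul]

lemma dotProduct_lapMatrix_mulVec_comm (f g : V → ℝ) :
    g ⬝ᵥ (G.lapMatrix ℝ *ᵥ f) = f ⬝ᵥ (G.lapMatrix ℝ *ᵥ g) := by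
  rw [dotProduct_mulVec, ← mulVec_transpose, (isSymm_lapMatrix ℝ G).eq, dotProduct_comm]

lemma dotProduct_lapMatrix_mulVec_self (f : V → ℝ) :
    f ⬝ᵥ (G.lapMatrix ℝ *ᵥ f) =
      (∑ q : V × V, if G.Adj q.1 q.2 then (f q.1 - f q.2) ^ 2 else 0) / 2 := by
  rw [← toLinearMap₂'_apply', lapMatrix_toLinearMap₂', Fintype.sum_prod_type]

lemma eq_of_dotProduct_lapMatrix_mulVec_self_eq_zero (hc : G.Connected) {f : V → ℝ}
    (hf : f ⬝ᵥ (G.lapMatrix ℝ *ᵥ f) = 0) (x y : V) : f x = f y := by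
  rw [← toLinearMap₂'_apply', lapMatrix_toLinearMap₂'_apply'_eq_zero_iff_forall_reachable] at hf
  exact hf x y (hc x y)

lemma sum_sq_sub_le_dotProduct_lapMatrix_mulVec (x₀ : V) (f : V → ℝ) :
    ∑ q : V × V, (if G.Adj q.1 q.2 ∧ G.dist x₀ q.2 = G.dist x₀ q.1 + 1
      then (f q.2 - f q.1) ^ 2 else 0) ≤ f ⬝ᵥ (G.lapMatrix ℝ *ᵥ f) := by
  set A : V × V → ℝ := fun q => if G.Adj q.1 q.2 ∧ G.dist x₀ q.2 = G.dist x₀ q.1 + 1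
    then (f q.2 - f q.1) ^ 2 else 0
  have hswap : ∑ q : V × V, A q.swap = ∑ q, A q := Equiv.sum_comp (Equiv.prodComm V V) A
  have hpointwise : ∀ q : V × V,
      A q + A q.swap ≤ if G.Adj q.1 q.2 then (f q.1 - f q.2) ^ 2 else 0 := by
    intro q
    by_cases h₁ : G.Adj q.1 q.2 ∧ G.dist x₀ q.2 = G.dist x₀ q.1 + 1 <;>
    by_cases h₂ : G.Adj q.2 q.1 ∧ G.dist x₀ q.1 = G.dist x₀ q.2 + 1
    · omega
    · simp only [A, Prod.fst_swap, Prod.snd_swap, if_pos h₁, if_neg h₂, if_pos h₁.1, add_zero,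
        sub_sq_comm, le_refl]
    · simp only [A, Prod.fst_swap, Prod.snd_swap, if_neg h₁, if_pos h₂, if_pos h₂.1.symm,
        zero_add, le_refl]
    · simp only [A, Prod.fst_swap, Prod.snd_swap, if_neg h₁, if_neg h₂, add_zero]
      split_ifs <;> positivity
  rw [dotProduct_lapMatrix_mulVec_self, le_div_iff₀ two_pos, mul_two]
  nth_rewrite 2 [← hswap]
  rw [← sum_add_distrib]
  exact sum_le_sum fun q _ => hpointwise q

end Laplacian

section LeafCount

variable {G : SimpleGraph V}

noncomputable def leavesBeyond (G : SimpleGraph V) (u v : V) (h : ℕ) : Finset V :=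
  (bdry G).filter fun z => G.dist v z ≤ h ∧ G.dist u z = G.dist v z + 1

lemma eq_or_exists_mem_leavesBeyond_of_mem_succ {u v z : V} {h : ℕ} (huv : G.Adj u v)
    (hz : z ∈ leavesBeyond G u v (h + 1)) :
    z = v ∨ ∃ w ∈ (G.neighborFinset v).erase u, z ∈ leavesBeyond G v w h := by
  simp only [leavesBeyond, mem_filter] at hz ⊢
  obtain ⟨hzb, hzh, hzu⟩ := hz
  have hvz : G.Reachable v z :=
    huv.symm.reachable.trans (Reachable.of_dist_ne_zero (by omega))
  rcases eq_or_ne z v with rfl | hne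
  · exact .inl rfl
  obtain ⟨w, hvw, hwz⟩ := exists_adj_dist_add_one_eq (hvz.pos_dist_of_ne hne.symm).ne'
  refine .inr ⟨w, mem_erase.mpr ⟨?_, (mem_neighborFinset G v w).mpr hvw⟩, hzb, by omega, hwz.symm⟩
  rintro rfl
  omega

lemma card_leavesBeyond_le {D : ℕ} (hD : 1 ≤ D) (hdeg : ∀ v, G.degree v ≤ D + 1) (h : ℕ) :
    ∀ {u v : V}, G.Adj u v → #(leavesBeyond G u v h) ≤ D ^ h := by
  induction h with
  | zero =>
    intro u v huv
    refine (card_le_one.mpr fun z hz z' hz' => ?_).trans (pow_zero D).ge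
    simp only [leavesBeyond, mem_filter, nonpos_iff_eq_zero] at hz hz'
    have hreach : ∀ y, G.dist u y = G.dist v y + 1 → G.Reachable v y := fun y hy =>
      huv.symm.reachable.trans (Reachable.of_dist_ne_zero (by omega))
    rw [← (hreach z hz.2.2).dist_eq_zero_iff.mp hz.2.1,
      ← (hreach z' hz'.2.2).dist_eq_zero_iff.mp hz'.2.1]
  | succ h ih =>
    intro u v huv
    have hu : u ∈ G.neighborFinset v := (mem_neighborFinset G v u).mpr huv.symm
    have hcard : #((G.neighborFinset v).erase u) = G.degree v - 1 := by
      rw [card_erase_of_mem hu, card_neighborFinset_eq_degree]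
    by_cases hv : v ∈ bdry G
    · have hempty : (G.neighborFinset v).erase u = ∅ :=
        card_eq_zero.mp (by rw [hcard, (mem_filter.mp hv).2])
      have hsub : leavesBeyond G u v (h + 1) ⊆ {v} := fun z hz => by
        rcases eq_or_exists_mem_leavesBeyond_of_mem_succ huv hz with rfl | ⟨w, hw, -⟩
        · exact mem_singleton_self z
        · simp [hempty] at hw
      exact (card_le_card hsub).trans (by simpa using Nat.one_le_pow _ _ hD)
    · have hsub : leavesBeyond G u v (h + 1) ⊆
          ((G.neighborFinset v).erase u).biUnion fun w => leavesBeyond G v w h := by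
        intro z hz
        rcases eq_or_exists_mem_leavesBeyond_of_mem_succ huv hz with rfl | ⟨w, hw, hzw⟩
        · exact absurd (mem_filter.mp hz).1 hv
        · exact mem_biUnion.mpr ⟨w, hw, hzw⟩
      calc #(leavesBeyond G u v (h + 1))
          ≤ ∑ w ∈ (G.neighborFinset v).erase u, #(leavesBeyond G v w h) :=
            (card_le_card hsub).trans card_biUnion_le
        _ ≤ ∑ w ∈ (G.neighborFinset v).erase u, D ^ h :=
            sum_le_sum fun w hw => ih ((mem_neighborFinset G v w).mp (mem_of_mem_erase hw))
        _ ≤ D * D ^ h := by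
            rw [sum_const, hcard, smul_eq_mul]
            exact Nat.mul_le_mul_right _ (by have := hdeg v; omega)
        _ = D ^ (h + 1) := (pow_succ' D h).symm

end LeafCount

section Poincare

variable {G : SimpleGraph V} {D R : ℕ}

lemma sq_sub_le_sum_isGeodesicDart (hc : G.Connected) (hD : 1 ≤ D) {x₀ z : V}
    (hz : G.dist x₀ z ≤ R) (f : V → ℝ) :
    (f z - f x₀) ^ 2 ≤ (∑ i ∈ range R, (D : ℝ) ^ i) * ∑ q : V × V,
      if G.IsGeodesicDart x₀ z q then (f q.2 - f q.1) ^ 2 / (D : ℝ) ^ (R - 1 - G.dist x₀ q.1)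
      else 0 := by
  have hDpos : (0 : ℝ) < D := by exact_mod_cast hD
  obtain ⟨p, hp⟩ := hc.exists_walk_length_eq_dist x₀ z
  set F : V × V → ℝ := fun q => (f q.2 - f q.1) ^ 2 / (D : ℝ) ^ (R - 1 - G.dist x₀ q.1)
  have hF : ∀ q, 0 ≤ F q := fun q => div_nonneg (sq_nonneg _) (pow_pos hDpos _).le
  have hdist : ∀ i ≤ p.length, G.dist x₀ (p.getVert i) = i :=
    fun i hi => p.dist_getVert_of_length_eq_dist hp hi
  have hweights : ∑ i ∈ range p.length, (D : ℝ) ^ (R - 1 - i) ≤ ∑ i ∈ range R, (D : ℝ) ^ i := by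
    rw [← sum_range_reflect (fun i => (D : ℝ) ^ i) R]
    exact sum_le_sum_of_subset_of_nonneg (range_subset_range.mpr (hp ▸ hz))
      fun i _ _ => (pow_pos hDpos _).le
  have hdarts : ∑ i ∈ range p.length, F (p.getVert i, p.getVert (i + 1)) ≤
      ∑ q : V × V, if G.IsGeodesicDart x₀ z q then F q else 0 := by
    rw [← sum_image fun i hi j hj hij => by
      rw [← hdist i (mem_range.mp hi).le, ← hdist j (mem_range.mp hj).le, (Prod.mk.inj hij).1],
      ← sum_filter]
    refine sum_le_sum_of_subset_of_nonneg (fun q hq => ?_) fun q _ _ => hF q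
    obtain ⟨i, hi, rfl⟩ := mem_image.mp hq
    have hi := mem_range.mp hi
    refine mem_filter.mpr ⟨mem_univ _, p.adj_getVert_succ hi, ?_⟩
    rw [hdist i hi.le, p.dist_getVert_end_of_length_eq_dist hp, ← hp]
    omega
  calc (f z - f x₀) ^ 2
      ≤ (∑ i ∈ range p.length, (D : ℝ) ^ (R - 1 - i)) *
          ∑ i ∈ range p.length, F (p.getVert i, p.getVert (i + 1)) := by
        refine (p.sq_sub_le_sum_mul_sum_sq_div f fun i => pow_pos hDpos (R - 1 - i)).trans_eq ?_
        congr 1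
        refine sum_congr rfl fun i hi => ?_
        simp only [F, hdist i (mem_range.mp hi).le]
    _ ≤ _ := by gcongr

lemma sum_bdry_ite_isGeodesicDart_le (hc : G.Connected) (hD : 1 ≤ D)
    (hdeg : ∀ v, G.degree v ≤ D + 1) {x₀ : V} (hx₀ : ∀ z, G.dist x₀ z ≤ R) (f : V → ℝ)
    (q : V × V) :
    ∑ z ∈ bdry G, (if G.IsGeodesicDart x₀ z q
      then (f q.2 - f q.1) ^ 2 / (D : ℝ) ^ (R - 1 - G.dist x₀ q.1) else 0) ≤
    if G.Adj q.1 q.2 ∧ G.dist x₀ q.2 = G.dist x₀ q.1 + 1 then (f q.2 - f q.1) ^ 2 else 0 := by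
  obtain ⟨a, b⟩ := q
  rw [← sum_filter, sum_const, nsmul_eq_mul]
  set s := (bdry G).filter fun z => G.IsGeodesicDart x₀ z (a, b)
  rcases s.eq_empty_or_nonempty with hs | ⟨z₀, hz₀⟩
  · rw [hs, card_empty, Nat.cast_zero, zero_mul]
    split_ifs <;> positivity
  have hdist : ∀ {y z : V}, G.Adj y z → G.dist y z = 1 := dist_eq_one_iff_adj.mpr
  obtain ⟨hab, hz₀⟩ : G.Adj a b ∧ G.dist x₀ a + 1 + G.dist b z₀ = G.dist x₀ z₀ :=
    (mem_filter.mp hz₀).2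
  have hout : G.dist x₀ b = G.dist x₀ a + 1 := by
    have := hc.dist_triangle (u := x₀) (v := a) (w := b)
    have := hc.dist_triangle (u := x₀) (v := b) (w := z₀)
    have := hdist hab
    omega
  rw [if_pos ⟨hab, hout⟩]
  have hsub : s ⊆ leavesBeyond G a b (R - 1 - G.dist x₀ a) := by
    intro z hz
    obtain ⟨hzb, -, hz⟩ : z ∈ bdry G ∧ G.Adj a b ∧ G.dist x₀ a + 1 + G.dist b z = G.dist x₀ z :=
      mem_filter.mp hz
    have := hc.dist_triangle (u := a) (v := b) (w := z)
    have := hc.dist_triangle (u := x₀) (v := a) (w := z)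
    have := hdist hab
    have := hx₀ z
    exact mem_filter.mpr ⟨hzb, by omega, by omega⟩
  have hDpos : (0 : ℝ) < (D : ℝ) ^ (R - 1 - G.dist x₀ a) := by positivity
  have hcard : (#s : ℝ) ≤ (D : ℝ) ^ (R - 1 - G.dist x₀ a) := by
    exact_mod_cast (card_le_card hsub).trans (card_leavesBeyond_le hD hdeg _ hab)
  calc (#s : ℝ) * ((f b - f a) ^ 2 / (D : ℝ) ^ (R - 1 - G.dist x₀ a))
      ≤ (D : ℝ) ^ (R - 1 - G.dist x₀ a) *
          ((f b - f a) ^ 2 / (D : ℝ) ^ (R - 1 - G.dist x₀ a)) := by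
        gcongr
    _ = (f b - f a) ^ 2 := mul_div_cancel₀ _ hDpos.ne'

theorem sum_bdry_sq_sub_le_mul_dotProduct_lapMatrix_mulVec (hc : G.Connected) (hD : 1 ≤ D)
    (hdeg : ∀ v, G.degree v ≤ D + 1) {x₀ : V} (hx₀ : ∀ z, G.dist x₀ z ≤ R) (f : V → ℝ) :
    ∑ z ∈ bdry G, (f z - f x₀) ^ 2 ≤
      (∑ i ∈ range R, (D : ℝ) ^ i) * (f ⬝ᵥ (G.lapMatrix ℝ *ᵥ f)) :=
  calc ∑ z ∈ bdry G, (f z - f x₀) ^ 2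
      ≤ ∑ z ∈ bdry G, (∑ i ∈ range R, (D : ℝ) ^ i) * ∑ q : V × V,
          if G.IsGeodesicDart x₀ z q
          then (f q.2 - f q.1) ^ 2 / (D : ℝ) ^ (R - 1 - G.dist x₀ q.1) else 0 :=
        sum_le_sum fun z _ => sq_sub_le_sum_isGeodesicDart hc hD (hx₀ z) f
    _ = (∑ i ∈ range R, (D : ℝ) ^ i) * ∑ q : V × V, ∑ z ∈ bdry G,
          if G.IsGeodesicDart x₀ z q
          then (f q.2 - f q.1) ^ 2 / (D : ℝ) ^ (R - 1 - G.dist x₀ q.1) else 0 := by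
        rw [← mul_sum, sum_comm]
    _ ≤ (∑ i ∈ range R, (D : ℝ) ^ i) * ∑ q : V × V,
          if G.Adj q.1 q.2 ∧ G.dist x₀ q.2 = G.dist x₀ q.1 + 1 then (f q.2 - f q.1) ^ 2
          else 0 := by
        gcongr with q
        exact sum_bdry_ite_isGeodesicDart_le hc hD hdeg hx₀ f q
    _ ≤ _ := by
        gcongr
        exact sum_sq_sub_le_dotProduct_lapMatrix_mulVec G x₀ f

end Poincare

section Eigenpairs

variable {G : SimpleGraph V} {lam : ℝ} {f : V → ℝ}

lemma IsEigenpair.dotProduct_lapMatrix_mulVec (he : IsEigenpair G lam f) :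
    f ⬝ᵥ (G.lapMatrix ℝ *ᵥ f) = lam * ∑ x ∈ bdry G, f x ^ 2 := by
  rw [← lap_eq_lapMatrix_mulVec, dotProduct, ← sum_add_sum_compl (bdry G), mul_sum,
    sum_eq_zero (s := (bdry G)ᶜ) fun x hx => by rw [he.2.1 x (mem_compl.mp hx), mul_zero],
    add_zero]
  exact sum_congr rfl fun x hx => by rw [he.2.2 x hx]; ring

lemma IsEigenpair.sum_bdry_eq_zero (he : IsEigenpair G lam f) (hlam : lam ≠ 0) :
    ∑ x ∈ bdry G, f x = 0 := by
  have hsum : ∑ x, lap G f x = 0 := by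
    have := dotProduct_lapMatrix_mulVec_comm G f fun _ => 1
    rw [lapMatrix_mulVec_const_eq_zero, dotProduct_zero, ← lap_eq_lapMatrix_mulVec] at this
    simpa [dotProduct] using this
  rw [← sum_add_sum_compl (bdry G), sum_eq_zero (s := (bdry G)ᶜ) fun x hx => he.2.1 x
    (mem_compl.mp hx), add_zero, sum_congr rfl fun x hx => he.2.2 x hx, ← mul_sum] at hsum
  exact (mul_eq_zero.mp hsum).resolve_left hlam

lemma IsEigenpair.sum_bdry_sq_pos (he : IsEigenpair G lam f) (hc : G.Connected)
    (hb : (bdry G).Nonempty) : 0 < ∑ x ∈ bdry G, f x ^ 2 := by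
  refine (sum_nonneg fun x _ => sq_nonneg (f x)).lt_of_ne fun h => he.1 ?_
  obtain ⟨b, hb⟩ := hb
  have hfb : f b = 0 :=
    pow_eq_zero_iff two_ne_zero |>.mp
      ((sum_eq_zero_iff_of_nonneg fun x _ => sq_nonneg _).mp h.symm b hb)
  have hconst := eq_of_dotProduct_lapMatrix_mulVec_self_eq_zero G hc
    (by rw [he.dotProduct_lapMatrix_mulVec, ← h, mul_zero])
  funext x
  rw [hconst x b, hfb]
  rfl

theorem IsEigenpair.one_div_sum_pow_le {D R : ℕ} (he : IsEigenpair G lam f) (hlam : 0 < lam)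
    (hc : G.Connected) (hb : (bdry G).Nonempty) (hD : 1 ≤ D) (hdeg : ∀ v, G.degree v ≤ D + 1)
    {x₀ : V} (hx₀ : ∀ z, G.dist x₀ z ≤ R) : 1 / ∑ i ∈ range R, (D : ℝ) ^ i ≤ lam := by
  set S := ∑ i ∈ range R, (D : ℝ) ^ i
  set Q := ∑ x ∈ bdry G, f x ^ 2
  have hQ : 0 < Q := he.sum_bdry_sq_pos hc hb
  have hchain : Q ≤ S * lam * Q :=
    calc Q ≤ ∑ z ∈ bdry G, (f z - f x₀) ^ 2 :=
          sum_sq_le_sum_sq_sub_of_sum_eq_zero _ (he.sum_bdry_eq_zero hlam.ne') _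
      _ ≤ S * (f ⬝ᵥ (G.lapMatrix ℝ *ᵥ f)) :=
          sum_bdry_sq_sub_le_mul_dotProduct_lapMatrix_mulVec hc hD hdeg hx₀ f
      _ = S * lam * Q := by rw [he.dotProduct_lapMatrix_mulVec, mul_assoc]
  have hSlam : 1 ≤ S * lam := le_of_mul_le_mul_right (by rwa [one_mul]) hQ
  have hS : 0 < S := pos_of_mul_pos_left (one_pos.trans_le hSlam) hlam.le
  rwa [div_le_iff₀ hS, mul_comm]

end Eigenpairs

section Existence

variable {G : SimpleGraph V}

lemma exists_harmonicExtension (hc : G.Connected) (hb : (bdry G).Nonempty) :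
    ∃ E : ({x // x ∈ bdry G} → ℝ) →ₗ[ℝ] (V → ℝ), (∀ g (b : {x // x ∈ bdry G}), E g b = g b) ∧
      ∀ g, ∀ x ∉ bdry G, (G.lapMatrix ℝ *ᵥ E g) x = 0 := by
  let Φ : (V → ℝ) →ₗ[ℝ] ({x // x ∈ bdry G} → ℝ) × ({x // x ∉ bdry G} → ℝ) :=
    (LinearMap.funLeft ℝ ℝ Subtype.val).prod
      (LinearMap.funLeft ℝ ℝ Subtype.val ∘ₗ (G.lapMatrix ℝ).mulVecLin)
  have hinj : Function.Injective Φ := by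
    rw [← LinearMap.ker_eq_bot, LinearMap.ker_eq_bot']
    intro f hf
    have hfb : ∀ x ∈ bdry G, f x = 0 := fun x hx => congrFun (congrArg Prod.fst hf) ⟨x, hx⟩
    have hfi : ∀ x ∉ bdry G, (G.lapMatrix ℝ *ᵥ f) x = 0 :=
      fun x hx => congrFun (congrArg Prod.snd hf) ⟨x, hx⟩
    have hzero : f ⬝ᵥ (G.lapMatrix ℝ *ᵥ f) = 0 := sum_eq_zero fun x _ => by
      by_cases hx : x ∈ bdry G
      · rw [hfb x hx, zero_mul]
      · rw [hfi x hx, mul_zero]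
    obtain ⟨b, hb⟩ := hb
    funext x
    rw [eq_of_dotProduct_lapMatrix_mulVec_self_eq_zero G hc hzero x b, hfb b hb]
    rfl
  have hrank : Module.finrank ℝ (V → ℝ) =
      Module.finrank ℝ (({x // x ∈ bdry G} → ℝ) × ({x // x ∉ bdry G} → ℝ)) := by
    simp only [Module.finrank_prod, Module.finrank_fintype_fun_eq_card,
      Fintype.card_subtype_compl, Fintype.card_coe]
    have := card_le_univ (bdry G)
    omega
  let e := LinearEquiv.ofBijective Φ
    ⟨hinj, (LinearMap.injective_iff_surjective_of_finrank_eq_finrank hrank).mp hinj⟩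
  refine ⟨e.symm.toLinearMap ∘ₗ LinearMap.inl ℝ _ _, fun g b => ?_, fun g x hx => ?_⟩
  · exact congrFun (congrArg Prod.fst (e.apply_symm_apply (g, 0))) b
  · exact congrFun (congrArg Prod.snd (e.apply_symm_apply (g, 0))) ⟨x, hx⟩

theorem exists_pos_isEigenpair (hc : G.Connected) {b₁ b₂ : V} (hb₁ : b₁ ∈ bdry G)
    (hb₂ : b₂ ∈ bdry G) (hne : b₁ ≠ b₂) : ∃ lam f, 0 < lam ∧ IsEigenpair G lam f := by
  obtain ⟨E, hEb, hEi⟩ := exists_harmonicExtension hc ⟨b₁, hb₁⟩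
  -- the Dirichlet-to-Neumann map
  let T : ({x // x ∈ bdry G} → ℝ) →ₗ[ℝ] ({x // x ∈ bdry G} → ℝ) :=
    LinearMap.funLeft ℝ ℝ Subtype.val ∘ₗ (G.lapMatrix ℝ).mulVecLin ∘ₗ E
  have hT : ∀ g h, T g ⬝ᵥ h = E h ⬝ᵥ (G.lapMatrix ℝ *ᵥ E g) := by
    intro g h
    rw [dotProduct, dotProduct, ← sum_add_sum_compl (bdry G), sum_eq_zero (s := (bdry G)ᶜ)
      fun x hx => by rw [hEi g x (mem_compl.mp hx), mul_zero], add_zero, ← sum_coe_sort (bdry G)]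
    exact sum_congr rfl fun b _ => by rw [hEb, mul_comm]; rfl
  set g₀ : {x // x ∈ bdry G} → ℝ := Pi.single ⟨b₁, hb₁⟩ 1
  have hpos : 0 < T g₀ ⬝ᵥ g₀ := by
    rw [hT]
    refine lt_of_le_of_ne (by rw [dotProduct_lapMatrix_mulVec_self]; positivity) fun h => ?_
    have h₁₂ := eq_of_dotProduct_lapMatrix_mulVec_self_eq_zero G hc h.symm b₁ b₂
    rw [hEb g₀ ⟨b₁, hb₁⟩, hEb g₀ ⟨b₂, hb₂⟩] at h₁₂
    simp [g₀, hne.symm] at h₁₂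
  obtain ⟨μ, hμ, g, hg, hTg⟩ := exists_pos_eigenvector_of_symmetric T
    (fun g h => by rw [hT, dotProduct_comm g, hT, dotProduct_lapMatrix_mulVec_comm]) hpos
  refine ⟨μ, E g, hμ, fun h => hg (funext fun b => ?_), fun x hx => ?_, fun x hx => ?_⟩
  · rw [← hEb g b, h]
    rfl
  · rw [lap_eq_lapMatrix_mulVec]
    exact hEi g x hx
  · rw [lap_eq_lapMatrix_mulVec, hEb g ⟨x, hx⟩]
    exact congrFun hTg ⟨x, hx⟩

end Existence

theorem lambda2_lower_bound_even_general (R D : ℕ) (hD : 1 ≤ D)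
    (G : SimpleGraph V) (hG : G.IsTree) (hcard : 2 ≤ Fintype.card V)
    (hdiam : G.diam ≤ 2 * R) (hdeg : ∀ v : V, G.degree v ≤ D + 1) :
    (1 : ℝ) / (∑ i ∈ Finset.range R, (D : ℝ) ^ i) ≤ lambda2 G ∧
    (2 ≤ D → (1 : ℝ) / (∑ i ∈ Finset.range R, (D : ℝ) ^ i)
        = ((D : ℝ) - 1) / ((D : ℝ) ^ R - 1)) := by
  have : Nontrivial V := Fintype.one_lt_card_iff_nontrivial.mp hcard
  obtain ⟨b₁, b₂, hne, hb₁, hb₂⟩ := hG.exists_ne_and_degree_eq_one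
  have hb₁' : b₁ ∈ bdry G := by simpa [bdry] using hb₁
  have hb₂' : b₂ ∈ bdry G := by simpa [bdry] using hb₂
  obtain ⟨x₀, hx₀⟩ := hG.exists_forall_dist_le hdiam
  refine ⟨le_csInf ?_ ?_, fun hD₂ => ?_⟩
  · obtain ⟨lam, f, hlam, he⟩ := exists_pos_isEigenpair hG.connected hb₁' hb₂' hne
    exact ⟨lam, hlam, f, he⟩
  · rintro lam ⟨hlam, f, he⟩
    exact he.one_div_sum_pow_le hlam hG.connected ⟨b₁, hb₁'⟩ hD hdeg hx₀
  · rw [geom_sum_eq (by norm_cast; omega) R, one_div_div]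

/-- For integers `R, D ≥ 1` and a finite tree `G` of diameter at most
`2R` with all vertex degrees at most `D+1`:
`λ₂(G) ≥ 1 / (Σ_{i=0}^{R-1} D^i)`, and for `D ≥ 2` this bound equals `(D-1)/(D^R - 1)`. -/
theorem lambda2_lower_bound_even (R D : ℕ) (hR : 1 ≤ R) (hD : 1 ≤ D)
    (G : SimpleGraph V) (hG : G.IsTree) (hcard : 2 ≤ Fintype.card V)
    (hdiam : G.diam ≤ 2 * R) (hdeg : ∀ v : V, G.degree v ≤ D + 1) :
    (1 : ℝ) / (∑ i ∈ Finset.range R, (D : ℝ) ^ i) ≤ lambda2 G ∧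
    (2 ≤ D → (1 : ℝ) / (∑ i ∈ Finset.range R, (D : ℝ) ^ i)
        = ((D : ℝ) - 1) / ((D : ℝ) ^ R - 1)) :=
  lambda2_lower_bound_even_general R D hD G hG hcard hdiam hdeg
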